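/- Let μ(x)=(ax+b)/(cx+d) be a refining Möbius map and α=(φ₀,φ₁,...) a stream of digits from {L,R,M}. Let X = max(1/|c+d|, 1/|d-c|) and n = ⌈6·|ad-bc|·X²⌉. Then diam(μ ∘ φ₀ ∘ ... ∘ φ_{n-1}) < 1/3, and consequently there exists a digit φ ∈ {L,R,M} such that (μ ∘ φ₀ ∘ ... ∘ φ_{n-1})([-1,1]) ⊆ φ([-1,1]). -/

import Mathlib

noncomputable def digitL : ℝ → ℝ := fun x => (x - 1) / (x + 3)
noncomputable def digitR : ℝ → ℝ := fun x => (x + 1) / (-x + 3)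
noncomputable def digitM : ℝ → ℝ := fun x => x / 3

noncomputable def compStream (α : ℕ → ℝ → ℝ) : ℕ → ℝ → ℝ
  | 0 => id
  | k + 1 => compStream α k ∘ α k

/-!
Each digit, and hence each composite `φ₀ ∘ ⋯ ∘ φ_{n-1}`, is an increasing Möbius map of
`[-1, 1]` into itself, and its matrix obeys an invariant forcing the image `[l, u]` to have
length at most `2 / (n + 1)`. A Möbius map `μ` without pole on `[-1, 1]` is monotone there and
`|μ y - μ x| = |det μ| |y - x| / |(c y + d)(c x + d)| ≤ |det μ| X² |y - x|`, since the affine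
denominator attains its smallest absolute value at an endpoint. For the chosen `n` the image of
`[l, u]` is thus an interval in `[-1, 1]` of length `< 1/3`, and every such interval lies in one
of `[-1, 0]`, `[-1/3, 1/3]`, `[0, 1]`.
-/

open Set

noncomputable def mobius (a b c d : ℝ) (x : ℝ) : ℝ := (a * x + b) / (c * x + d)

section Mobius

variable {a b c d : ℝ}

/-- No hypothesis on the outer denominator is needed: when it vanishes, both sides are `0`
by the convention `x / 0 = 0`. -/
lemma mobius_comp_mobius {a' b' c' d' x : ℝ} (hx : c' * x + d' ≠ 0) :
    mobius a b c d (mobius a' b' c' d' x) =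
      mobius (a * a' + b * c') (a * b' + b * d') (c * a' + d * c') (c * b' + d * d') x := by
  unfold mobius
  rw [mul_div_assoc', mul_div_assoc', div_add' _ _ _ hx, div_add' _ _ _ hx,
    div_div_div_cancel_right₀ hx]
  ring_nf

lemma mobius_sub_mobius {x y : ℝ} (hx : c * x + d ≠ 0) (hy : c * y + d ≠ 0) :
    mobius a b c d y - mobius a b c d x =
      (a * d - b * c) * (y - x) / ((c * y + d) * (c * x + d)) := by
  unfold mobius
  rw [div_sub_div _ _ hy hx]
  congr 1
  ring

lemma continuousOn_mobius {s : Set ℝ} (hs : ∀ x ∈ s, c * x + d ≠ 0) :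
    ContinuousOn (mobius a b c d) s :=
  ContinuousOn.div (by fun_prop) (by fun_prop) hs

lemma Icc_subset_image_mobius (hs : ∀ x ∈ Icc (-1 : ℝ) 1, c * x + d ≠ 0) :
    Icc (mobius a b c d (-1)) (mobius a b c d 1) ⊆ mobius a b c d '' Icc (-1) 1 :=
  intermediate_value_Icc (by norm_num) (continuousOn_mobius hs)

lemma affine_mul_pos (hb : ∀ x ∈ Icc (-1 : ℝ) 1, c * x + d ≠ 0) {x y : ℝ}
    (hx : x ∈ Icc (-1 : ℝ) 1) (hy : y ∈ Icc (-1 : ℝ) 1) :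
    0 < (c * x + d) * (c * y + d) := by
  by_contra! h
  have hzero : (0 : ℝ) ∈ uIcc (c * x + d) (c * y + d) := by
    rcases (hb x hx).lt_or_gt with h1 | h1
    · exact mem_uIcc.2 (Or.inl ⟨h1.le, nonneg_of_mul_nonpos_right h h1⟩)
    · exact mem_uIcc.2 (Or.inr ⟨nonpos_of_mul_nonpos_right h h1, h1.le⟩)
  obtain ⟨t, ht, ht0⟩ :=
    intermediate_value_uIcc (f := fun t => c * t + d) (by fun_prop) hzero
  exact hb t (uIcc_subset_Icc hx hy ht) ht0

lemma one_div_abs_affine_le_max (hb : ∀ x ∈ Icc (-1 : ℝ) 1, c * x + d ≠ 0) {x : ℝ}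
    (hx : x ∈ Icc (-1 : ℝ) 1) : 1 / |c * x + d| ≤ max (1 / |c + d|) (1 / |d - c|) := by
  have hA := affine_mul_pos hb hx (right_mem_Icc.2 (by norm_num : (-1 : ℝ) ≤ 1))
  have hB := affine_mul_pos hb hx (left_mem_Icc.2 (by norm_num : (-1 : ℝ) ≤ 1))
  obtain ⟨hx₁, hx₂⟩ := hx
  rcases (hb x ⟨hx₁, hx₂⟩).lt_or_gt with hy | hy
  · rw [abs_of_neg hy, abs_of_neg (by nlinarith), abs_of_neg (by nlinarith)]
    rcases le_total 0 c with hc | hc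
    · exact le_max_of_le_left (one_div_le_one_div_of_le (by nlinarith) (by nlinarith))
    · exact le_max_of_le_right (one_div_le_one_div_of_le (by nlinarith) (by nlinarith))
  · rw [abs_of_pos hy, abs_of_pos (by nlinarith), abs_of_pos (by nlinarith)]
    rcases le_total 0 c with hc | hc
    · exact le_max_of_le_right (one_div_le_one_div_of_le (by nlinarith) (by nlinarith))
    · exact le_max_of_le_left (one_div_le_one_div_of_le (by nlinarith) (by nlinarith))

lemma abs_mobius_sub_le (hb : ∀ x ∈ Icc (-1 : ℝ) 1, c * x + d ≠ 0) {x y : ℝ}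
    (hx : x ∈ Icc (-1 : ℝ) 1) (hy : y ∈ Icc (-1 : ℝ) 1) :
    |mobius a b c d y - mobius a b c d x| ≤
      |a * d - b * c| * max (1 / |c + d|) (1 / |d - c|) ^ 2 * |y - x| := by
  set X := max (1 / |c + d|) (1 / |d - c|)
  have hX := one_div_abs_affine_le_max hb hx
  have hY := one_div_abs_affine_le_max hb hy
  rw [mobius_sub_mobius (hb x hx) (hb y hy), abs_div, abs_mul, abs_mul]
  calc |a * d - b * c| * |y - x| / (|c * y + d| * |c * x + d|)
      = |a * d - b * c| * |y - x| * ((1 / |c * y + d|) * (1 / |c * x + d|)) := by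
        field_simp
    _ ≤ |a * d - b * c| * |y - x| * (X * X) := by gcongr
    _ = |a * d - b * c| * X ^ 2 * |y - x| := by ring

lemma mobius_monotoneOn (hb : ∀ x ∈ Icc (-1 : ℝ) 1, c * x + d ≠ 0)
    (hD : 0 ≤ a * d - b * c) :
    MonotoneOn (mobius a b c d) (Icc (-1) 1) := fun x hx y hy hxy => by
  rw [← sub_nonneg, mobius_sub_mobius (hb x hx) (hb y hy)]
  exact div_nonneg (mul_nonneg hD (sub_nonneg.2 hxy)) (affine_mul_pos hb hy hx).le

lemma mobius_antitoneOn (hb : ∀ x ∈ Icc (-1 : ℝ) 1, c * x + d ≠ 0)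
    (hD : a * d - b * c ≤ 0) :
    AntitoneOn (mobius a b c d) (Icc (-1) 1) := fun x hx y hy hxy => by
  rw [← sub_nonpos, mobius_sub_mobius (hb x hx) (hb y hy)]
  exact div_nonpos_of_nonpos_of_nonneg (mul_nonpos_of_nonpos_of_nonneg hD (sub_nonneg.2 hxy))
    (affine_mul_pos hb hy hx).le

lemma mobius_mapsTo_uIcc (hb : ∀ x ∈ Icc (-1 : ℝ) 1, c * x + d ≠ 0) {x y : ℝ}
    (hx : x ∈ Icc (-1 : ℝ) 1) (hy : y ∈ Icc (-1 : ℝ) 1) :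
    MapsTo (mobius a b c d) (Icc x y) (uIcc (mobius a b c d x) (mobius a b c d y)) := by
  have hsub : Icc x y ⊆ Icc (-1) 1 := Icc_subset_Icc hx.1 hy.2
  rcases le_total 0 (a * d - b * c) with hD | hD
  · exact ((mobius_monotoneOn hb hD).mono hsub).mapsTo_Icc.mono_right Icc_subset_uIcc
  · exact ((mobius_antitoneOn hb hD).mono hsub).mapsTo_Icc.mono_right Icc_subset_uIcc'

end Mobius

def IsDigit (φ : ℝ → ℝ) : Prop := φ = digitL ∨ φ = digitR ∨ φ = digitM

section Digits

lemma digitL_eq_mobius : digitL = mobius 1 (-1) 1 3 := by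
  funext x; simp only [digitL, mobius]; ring_nf

lemma digitR_eq_mobius : digitR = mobius 1 1 (-1) 3 := by
  funext x; simp only [digitR, mobius]; ring_nf

lemma digitM_eq_mobius : digitM = mobius 1 0 0 3 := by
  funext x; simp only [digitM, mobius]; ring_nf

lemma IsDigit.eq_mobius {φ : ℝ → ℝ} (h : IsDigit φ) :
    φ = mobius 1 (-1) 1 3 ∨ φ = mobius 1 1 (-1) 3 ∨ φ = mobius 1 0 0 3 := by
  rwa [← digitL_eq_mobius, ← digitR_eq_mobius, ← digitM_eq_mobius]

lemma digit_denom_ne_zero {c : ℝ} (hc : |c| ≤ 1) {x : ℝ} (hx : x ∈ Icc (-1 : ℝ) 1) :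
    c * x + 3 ≠ 0 := by
  have : |c * x| ≤ 1 := by
    rw [abs_mul]; exact mul_le_one₀ hc (abs_nonneg x) (abs_le.2 hx)
  linarith [neg_abs_le (c * x)]

variable {φ : ℝ → ℝ}

lemma IsDigit.monotoneOn (h : IsDigit φ) : MonotoneOn φ (Icc (-1) 1) := by
  rcases h.eq_mobius with rfl | rfl | rfl <;>
    exact mobius_monotoneOn (fun x hx => digit_denom_ne_zero (by norm_num) hx) (by norm_num)

lemma IsDigit.mapsTo (h : IsDigit φ) : MapsTo φ (Icc (-1) 1) (Icc (-1) 1) := by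
  refine h.monotoneOn.mapsTo_Icc.mono_right (Icc_subset_Icc ?_ ?_) <;>
    rcases h with rfl | rfl | rfl <;> norm_num [digitL, digitR, digitM]

lemma Icc_subset_image_digit (h : IsDigit φ) : Icc (φ (-1)) (φ 1) ⊆ φ '' Icc (-1) 1 := by
  rcases h.eq_mobius with rfl | rfl | rfl <;>
    exact Icc_subset_image_mobius fun x hx => digit_denom_ne_zero (by norm_num) hx

lemma exists_digit_uIcc_subset {A B : ℝ} (hA : A ∈ Icc (-1 : ℝ) 1)
    (hB : B ∈ Icc (-1 : ℝ) 1) (hAB : |A - B| ≤ 1 / 3) :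
    ∃ φ ∈ ({digitL, digitR, digitM} : Set (ℝ → ℝ)), uIcc A B ⊆ φ '' Icc (-1) 1 := by
  have hlo : -1 ≤ min A B := le_min hA.1 hB.1
  have hhi : max A B ≤ 1 := max_le hA.2 hB.2
  have hwidth : max A B - min A B ≤ 1 / 3 := by rwa [max_sub_min_eq_abs']
  have hsub {φ : ℝ → ℝ} (h : IsDigit φ) (h₁ : φ (-1) ≤ min A B)
      (h₂ : max A B ≤ φ 1) :
      uIcc A B ⊆ φ '' Icc (-1) 1 :=
    (Icc_subset_Icc h₁ h₂).trans (Icc_subset_image_digit h)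
  rcases le_or_gt (max A B) 0 with h0 | h0
  · refine ⟨digitL, by simp, hsub (Or.inl rfl) ?_ ?_⟩
    · exact (show digitL (-1) = -1 by norm_num [digitL]).trans_le hlo
    · exact h0.trans (show 0 = digitL 1 by norm_num [digitL]).le
  rcases le_or_gt (max A B) (1 / 3) with h1 | h1
  · refine ⟨digitM, by simp, hsub (Or.inr (Or.inr rfl)) ?_ ?_⟩
    · exact (show digitM (-1) = -1 / 3 by norm_num [digitM]).trans_le (by linarith)
    · exact h1.trans (show 1 / 3 = digitM 1 by norm_num [digitM]).le
  · refine ⟨digitR, by simp, hsub (Or.inr (Or.inl rfl)) ?_ ?_⟩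
    · exact (show digitR (-1) = 0 by norm_num [digitR]).trans_le (by linarith)
    · exact hhi.trans (show 1 = digitR 1 by norm_num [digitR]).le

end Digits

/-- With `e = r + s`, `f = s - r` (the denominators at `±1`) and `D = p s - q r`, the map
`mobius p q r s` sends `[-1, 1]` onto an interval of length `2 D / (e f) ≤ 2 / (n + 1)`;
the bounds `D ≤ e², D ≤ f²` make the invariant survive composition with a digit. -/
def ShrinkBound (n : ℕ) (p q r s : ℝ) : Prop :=
  0 < r + s ∧ 0 < s - r ∧ p * s - q * r ≤ (r + s) ^ 2 ∧ p * s - q * r ≤ (s - r) ^ 2 ∧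
    (n + 1) * (p * s - q * r) ≤ (r + s) * (s - r)

lemma ShrinkBound.exists_eqOn_comp_digit {n : ℕ} {p q r s : ℝ} (h : ShrinkBound n p q r s)
    {φ : ℝ → ℝ} (hφ : IsDigit φ) : ∃ p' q' r' s', ShrinkBound (n + 1) p' q' r' s' ∧
      EqOn (mobius p q r s ∘ φ) (mobius p' q' r' s') (Icc (-1) 1) := by
  obtain ⟨he, hf, hD₁, hD₂, hD⟩ := h
  rcases hφ.eq_mobius with rfl | rfl | rfl <;>
    refine ⟨_, _, _, _, ?_, fun x hx =>
      mobius_comp_mobius (digit_denom_ne_zero (by norm_num) hx)⟩ <;>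
    refine ⟨by linarith, by linarith, by nlinarith, by nlinarith, by push_cast; nlinarith⟩

lemma ShrinkBound.mobius_one_sub_mobius_neg_one_le {n : ℕ} {p q r s : ℝ}
    (h : ShrinkBound n p q r s) : mobius p q r s 1 - mobius p q r s (-1) ≤ 2 / (n + 1) := by
  obtain ⟨he, hf, -, -, hD⟩ := h
  have hlen : mobius p q r s 1 - mobius p q r s (-1) =
      2 * (p * s - q * r) / ((r + s) * (s - r)) := by
    rw [mobius_sub_mobius (by linarith) (by linarith)]
    congr 1 <;> ring
  rw [hlen, div_le_div_iff₀ (by positivity) (by positivity)]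
  linarith

section CompStream

variable {α : ℕ → ℝ → ℝ} (hα : ∀ i, IsDigit (α i))
include hα

lemma mapsTo_compStream (n : ℕ) : MapsTo (compStream α n) (Icc (-1) 1) (Icc (-1) 1) := by
  induction n with
  | zero => exact mapsTo_id _
  | succ n ih => exact ih.comp (hα n).mapsTo

lemma monotoneOn_compStream (n : ℕ) : MonotoneOn (compStream α n) (Icc (-1) 1) := by
  induction n with
  | zero => exact monotoneOn_id
  | succ n ih => exact ih.comp (hα n).monotoneOn (hα n).mapsTo

lemma exists_shrinkBound_eqOn_compStream (n : ℕ) :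
    ∃ p q r s, ShrinkBound n p q r s ∧
      EqOn (compStream α n) (mobius p q r s) (Icc (-1) 1) := by
  induction n with
  | zero =>
    exact ⟨1, 0, 0, 1, by unfold ShrinkBound; norm_num, fun x _ => by simp [compStream, mobius]⟩
  | succ n ih =>
    obtain ⟨p, q, r, s, hbound, heq⟩ := ih
    obtain ⟨p', q', r', s', hbound', heq'⟩ := hbound.exists_eqOn_comp_digit (hα n)
    exact ⟨p', q', r', s', hbound', fun x hx => (heq ((hα n).mapsTo hx)).trans (heq' hx)⟩

lemma compStream_one_sub_compStream_neg_one_le (n : ℕ) :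
    compStream α n 1 - compStream α n (-1) ≤ 2 / (n + 1) := by
  obtain ⟨p, q, r, s, hbound, heq⟩ := exists_shrinkBound_eqOn_compStream hα n
  rw [heq (right_mem_Icc.2 (by norm_num)), heq (left_mem_Icc.2 (by norm_num))]
  exact hbound.mobius_one_sub_mobius_neg_one_le

end CompStream

theorem explicit_bound_emits (a b c d : ℝ) (m : ℝ → ℝ)
    (hm : m = fun x => (a * x + b) / (c * x + d))
    (hb : ∀ x ∈ Set.Icc (-1 : ℝ) 1, c * x + d ≠ 0)
    (hr : ∀ x ∈ Set.Icc (-1 : ℝ) 1, m x ∈ Set.Icc (-1 : ℝ) 1)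
    (α : ℕ → ℝ → ℝ)
    (hα : ∀ i, α i = digitL ∨ α i = digitR ∨ α i = digitM)
    (X : ℝ) (hX : X = max (1 / |c + d|) (1 / |d - c|))
    (n : ℕ) (hn : n = ⌈6 * |a * d - b * c| * X ^ 2⌉₊) :
    |m (compStream α n (-1)) - m (compStream α n 1)| < 1 / 3 ∧
      ∃ φ ∈ ({digitL, digitR, digitM} : Set (ℝ → ℝ)),
        ∀ x ∈ Set.Icc (-1 : ℝ) 1, m (compStream α n x) ∈ φ '' Set.Icc (-1 : ℝ) 1 := by
  change m = mobius a b c d at hm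
  subst hm hX
  set K := |a * d - b * c| * max (1 / |c + d|) (1 / |d - c|) ^ 2
  have hneg : (-1 : ℝ) ∈ Icc (-1 : ℝ) 1 := left_mem_Icc.2 (by norm_num)
  have hone : (1 : ℝ) ∈ Icc (-1 : ℝ) 1 := right_mem_Icc.2 (by norm_num)
  have hl := mapsTo_compStream hα n hneg
  have hu := mapsTo_compStream hα n hone
  have hlu := monotoneOn_compStream hα n hneg hone (by norm_num)
  have hlen := compStream_one_sub_compStream_neg_one_le hα n
  have hK : 6 * K ≤ n := (Nat.le_ceil (6 * K)).trans_eq (by rw [hn, mul_assoc])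
  have hdiam :
      |mobius a b c d (compStream α n (-1)) - mobius a b c d (compStream α n 1)| < 1 / 3 :=
    calc _ ≤ K * |compStream α n (-1) - compStream α n 1| := abs_mobius_sub_le hb hu hl
      _ ≤ K * (2 / (n + 1)) := by
        gcongr
        rwa [abs_sub_comm, abs_of_nonneg (sub_nonneg.2 hlu)]
      _ < 1 / 3 := by
        rw [mul_div_assoc', div_lt_div_iff₀ (by positivity) (by norm_num)]
        linarith
  obtain ⟨φ, hφ, hsub⟩ := exists_digit_uIcc_subset (hr _ hl) (hr _ hu) hdiam.le
  exact ⟨hdiam, φ, hφ, fun x hx =>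
    hsub (mobius_mapsTo_uIcc hb hl hu ((monotoneOn_compStream hα n).mapsTo_Icc hx))⟩
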